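/- Let ρ be a density matrix on ℂ^d⊗ℂ^d, R a positive semidefinite source-operator of type T₁₂₂ for ρ, and σ_R = tr^{(1)}[R]. If a Hermitian matrix W on ℂ^d with operator norm at most 1 satisfies the Bell perfect correlation/anticorrelation restriction tr[ρ(W⊗W)] = ε with ε ∈ {+1, −1}, then for every Hermitian matrix W̃ on ℂ^d with operator norm at most 1, tr[σ_R(W⊗W̃)] = ε·tr[ρ(W⊗W̃)]. -/

import Mathlib

open Matrix
open scoped Kronecker ComplexOrder

namespace BellPaper

variable {α β γ : Type*} [Fintype α] [Fintype β] [Fintype γ]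

/-- Partial trace over the first factor of a threefold tensor product. -/
noncomputable def ptr1 (T : Matrix ((α × β) × γ) ((α × β) × γ) ℂ) :
    Matrix (β × γ) (β × γ) ℂ :=
  fun p q => ∑ i : α, T ((i, p.1), p.2) ((i, q.1), q.2)

/-- Partial trace over the second factor of a threefold tensor product. -/
noncomputable def ptr2 (T : Matrix ((α × β) × γ) ((α × β) × γ) ℂ) :
    Matrix (α × γ) (α × γ) ℂ :=
  fun p q => ∑ j : β, T ((p.1, j), p.2) ((q.1, j), q.2)

/-- Partial trace over the third factor of a threefold tensor product. -/
noncomputable def ptr3 (T : Matrix ((α × β) × γ) ((α × β) × γ) ℂ) :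
    Matrix (α × β) (α × β) ℂ :=
  fun p q => ∑ k : γ, T (p, k) (q, k)

/-- Partial trace over the second factor of a twofold tensor product. -/
noncomputable def ptrB (M : Matrix (α × β) (α × β) ℂ) : Matrix α α ℂ :=
  fun i i' => ∑ j : β, M (i, j) (i', j)

/-- A density matrix: positive semidefinite with unit trace. -/
def IsDensityMatrix {n : Type*} [Fintype n] (ρ : Matrix n n ℂ) : Prop :=
  ρ.PosSemidef ∧ ρ.trace = 1

/-- Source-operator of type `T₁₂₂` for a state on ℂ^{d₁}⊗ℂ^{d₂}. -/
def IsSource122 {d₁ d₂ : ℕ} (ρ : Matrix (Fin d₁ × Fin d₂) (Fin d₁ × Fin d₂) ℂ)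
    (T : Matrix ((Fin d₁ × Fin d₂) × Fin d₂) ((Fin d₁ × Fin d₂) × Fin d₂) ℂ) : Prop :=
  T.IsHermitian ∧ ptr2 T = ρ ∧ ptr3 T = ρ

/-- Source-operator of type `T₁₁₂` for a state on ℂ^{d₁}⊗ℂ^{d₂}. -/
def IsSource112 {d₁ d₂ : ℕ} (ρ : Matrix (Fin d₁ × Fin d₂) (Fin d₁ × Fin d₂) ℂ)
    (S : Matrix ((Fin d₁ × Fin d₁) × Fin d₂) ((Fin d₁ × Fin d₁) × Fin d₂) ℂ) : Prop :=
  S.IsHermitian ∧ ptr1 S = ρ ∧ ptr2 S = ρ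

/-- A DSO state: a density matrix admitting a positive semidefinite source-operator. -/
def IsDSO {d₁ d₂ : ℕ} (ρ : Matrix (Fin d₁ × Fin d₂) (Fin d₁ × Fin d₂) ℂ) : Prop :=
  IsDensityMatrix ρ ∧
    ((∃ T, T.PosSemidef ∧ IsSource122 ρ T) ∨ (∃ S, S.PosSemidef ∧ IsSource112 ρ S))

/-- A Bell class state: a density matrix admitting a density source-operator with the
special dilation property (all three partial traces equal the state). -/
def IsBellClass {d : ℕ} (ρ : Matrix (Fin d × Fin d) (Fin d × Fin d) ℂ) : Prop :=
  IsDensityMatrix ρ ∧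
    ∃ T : Matrix ((Fin d × Fin d) × Fin d) ((Fin d × Fin d) × Fin d) ℂ,
      T.PosSemidef ∧ ptr1 T = ρ ∧ ptr2 T = ρ ∧ ptr3 T = ρ

/-- The operator (spectral) norm of a matrix acting on a Euclidean space. -/
noncomputable def opNorm {n : Type*} [Fintype n] [DecidableEq n] (W : Matrix n n ℂ) : ℝ :=
  ‖Matrix.toEuclideanCLM (𝕜 := ℂ) W‖

/-- The swap (permutation) operator `V_d` on ℂ^d ⊗ ℂ^d. -/
noncomputable def swapMat (d : ℕ) : Matrix (Fin d × Fin d) (Fin d × Fin d) ℂ :=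
  fun p q => if p.1 = q.2 ∧ p.2 = q.1 then 1 else 0

/-- The Werner state on ℂ^d ⊗ ℂ^d. -/
noncomputable def werner (d : ℕ) : Matrix (Fin d × Fin d) (Fin d × Fin d) ℂ :=
  (((d : ℂ) + 1) / (d : ℂ) ^ 3) • (1 : Matrix (Fin d × Fin d) (Fin d × Fin d) ℂ)
    - ((d : ℂ) ^ 2)⁻¹ • swapMat d

/-- The triple of indices of a point of the threefold product. -/
def triple {d : ℕ} (p : (Fin d × Fin d) × Fin d) : Fin 3 → Fin d := ![p.1.1, p.1.2, p.2]

/-- The unitary permuting the three tensor factors of ℂ^d ⊗ ℂ^d ⊗ ℂ^d according to π. -/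
noncomputable def permMat (d : ℕ) (π : Equiv.Perm (Fin 3)) :
    Matrix ((Fin d × Fin d) × Fin d) ((Fin d × Fin d) × Fin d) ℂ :=
  fun p q => if ∀ i, triple p (π i) = triple q i then 1 else 0

/-- The antisymmetrization projection `Q_d^{(-)}` on ℂ^d ⊗ ℂ^d ⊗ ℂ^d. -/
noncomputable def antisym (d : ℕ) :
    Matrix ((Fin d × Fin d) × Fin d) ((Fin d × Fin d) × Fin d) ℂ :=
  (6 : ℂ)⁻¹ • ∑ π : Equiv.Perm (Fin 3), (((Equiv.Perm.sign π : ℤ) : ℂ)) • permMat d π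

/-- Tensor product of two vectors. -/
def tens {m n : Type*} (u : m → ℂ) (v : n → ℂ) : m × n → ℂ := fun p => u p.1 * v p.2

/-- The rank-one operator |v⟩⟨v|. -/
noncomputable def outer {n : Type*} (v : n → ℂ) : Matrix n n ℂ :=
  Matrix.vecMulVec v (star v)

/-! With `A = W ⊗ 1 ⊗ 1` and `B = 1 ⊗ W ⊗ 1`, commuting Hermitian contractions with
`A B = W ⊗ W ⊗ 1`, the Bell restriction reads `tr[R A B] = ε` because `tr⁽³⁾[R] = ρ`.
For `C = B - ε A` this gives `tr[R Cᴴ C] = (tr[R B²] - 1) + (tr[R A²] - 1) ≤ 0`, so `R C = 0`,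
i.e. `R B = ε R A`. Multiplying by `1 ⊗ 1 ⊗ W̃` and taking traces turns `R B` into `tr⁽¹⁾[R]`
and `R A` into `tr⁽²⁾[R] = ρ`. -/

section PosSemidef

variable {𝕜 m n : Type*} [RCLike 𝕜] [Fintype m] [Fintype n]

open scoped MatrixOrder in
theorem _root_.Matrix.PosSemidef.exists_eq_conjTranspose_mul_self {R : Matrix n n 𝕜}
    (hR : R.PosSemidef) : ∃ S : Matrix n n 𝕜, R = Sᴴ * S := by
  classical
  exact CStarAlgebra.nonneg_iff_eq_star_mul_self.mp hR.nonneg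

theorem _root_.Matrix.PosSemidef.trace_mul_nonneg {R P : Matrix n n 𝕜} (hR : R.PosSemidef)
    (hP : P.PosSemidef) : 0 ≤ (R * P).trace := by
  obtain ⟨S, rfl⟩ := hR.exists_eq_conjTranspose_mul_self
  rw [mul_assoc, trace_mul_comm]
  exact (hP.mul_mul_conjTranspose_same S).trace_nonneg

theorem _root_.Matrix.PosSemidef.trace_mul_le_one [DecidableEq n] {R X : Matrix n n 𝕜}
    (hR : R.PosSemidef) (htr : R.trace = 1) (hX : (1 - X).PosSemidef) : (R * X).trace ≤ 1 := by
  have := hR.trace_mul_nonneg hX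
  rwa [mul_sub, mul_one, trace_sub, htr, sub_nonneg] at this

theorem _root_.Matrix.PosSemidef.mul_conjTranspose_eq_zero_of_trace_eq_zero
    {R : Matrix n n 𝕜} {C : Matrix m n 𝕜} (hR : R.PosSemidef)
    (h : (R * (Cᴴ * C)).trace = 0) : R * Cᴴ = 0 := by
  obtain ⟨S, rfl⟩ := hR.exists_eq_conjTranspose_mul_self
  rw [conjTranspose_mul_self_mul_eq_zero, ← conjTranspose_mul_self_eq_zero,
    ← (posSemidef_conjTranspose_mul_self _).trace_eq_zero_iff, conjTranspose_mul,
    conjTranspose_conjTranspose, ← Matrix.mul_assoc, trace_mul_comm]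
  rw [trace_mul_comm] at h
  simpa only [← Matrix.mul_assoc] using h

theorem _root_.Matrix.PosSemidef.mul_eq_smul_mul_of_trace_mul_eq [DecidableEq n]
    {R A B : Matrix n n 𝕜} (hR : R.PosSemidef) (htr : R.trace = 1) (hA : A.IsHermitian)
    (hB : B.IsHermitian) (hA1 : (1 - A * A).PosSemidef) (hB1 : (1 - B * B).PosSemidef)
    (hAB : Commute A B) {ε : ℝ} (hε : ε ^ 2 = 1) (hcorr : (R * (A * B)).trace = ε) :
    R * B = (ε : 𝕜) • (R * A) := by
  set C := B - (ε : 𝕜) • A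
  have hε' : (ε : 𝕜) * ε = 1 := by rw [← RCLike.ofReal_mul, ← sq, hε, RCLike.ofReal_one]
  have hC : Cᴴ = C := by
    rw [conjTranspose_sub, conjTranspose_smul, hA.eq, hB.eq, RCLike.star_def, RCLike.conj_ofReal]
  have hCC : Cᴴ * C = B * B + A * A - (2 * ε : 𝕜) • (A * B) := by
    rw [hC]
    simp only [C, sub_mul, mul_sub, smul_sub, smul_mul_assoc, mul_smul_comm, smul_smul, hε',
      one_smul, hAB.eq]
    module
  have hzero : (R * (Cᴴ * C)).trace = 0 := by
    refine le_antisymm ?_ (hR.trace_mul_nonneg (posSemidef_conjTranspose_mul_self C))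
    have hsum : (R * (Cᴴ * C)).trace
        = ((R * (B * B)).trace - 1) + ((R * (A * A)).trace - 1) := by
      rw [hCC, mul_sub, mul_add, mul_smul_comm, trace_sub, trace_add, trace_smul, hcorr,
        smul_eq_mul, mul_assoc, hε']
      ring
    rw [hsum]
    exact add_nonpos (sub_nonpos.mpr (hR.trace_mul_le_one htr hB1))
      (sub_nonpos.mpr (hR.trace_mul_le_one htr hA1))
  have := hR.mul_conjTranspose_eq_zero_of_trace_eq_zero hzero
  rwa [hC, mul_sub, mul_smul_comm, sub_eq_zero] at this

end PosSemidef

open scoped Matrix.Norms.L2Operator MatrixOrder in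
theorem one_sub_conjTranspose_mul_self_posSemidef {n : Type*} [Fintype n] [DecidableEq n]
    {W : Matrix n n ℂ} (hW : opNorm W ≤ 1) : (1 - Wᴴ * W).PosSemidef := by
  have h1 : ‖W‖ ^ 2 ≤ 1 := pow_le_one₀ (norm_nonneg _) hW
  calc star W * W ≤ algebraMap ℝ _ (‖W‖ ^ 2) := CStarAlgebra.star_mul_le_algebraMap_norm_sq
    _ ≤ algebraMap ℝ _ 1 := algebraMap_mono _ h1
    _ = 1 := map_one _

section Kronecker

variable {𝕜 m n : Type*} [RCLike 𝕜]

theorem _root_.Matrix.IsHermitian.kronecker {A : Matrix m m 𝕜} {B : Matrix n n 𝕜}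
    (hA : A.IsHermitian) (hB : B.IsHermitian) : (A ⊗ₖ B).IsHermitian := by
  rw [IsHermitian, conjTranspose_kronecker, hA.eq, hB.eq]

variable [Fintype m] [Fintype n] [DecidableEq m] [DecidableEq n] {X : Matrix m m 𝕜}

theorem _root_.Matrix.PosSemidef.one_sub_kronecker_one (hX : (1 - X).PosSemidef) :
    (1 - X ⊗ₖ (1 : Matrix n n 𝕜)).PosSemidef := by
  have h : (1 - X) ⊗ₖ (1 : Matrix n n 𝕜) = 1 - X ⊗ₖ (1 : Matrix n n 𝕜) := by
    ext ⟨i, j⟩ ⟨k, l⟩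
    by_cases j = l <;> simp [one_apply, *]
  exact h ▸ hX.kronecker .one

theorem _root_.Matrix.PosSemidef.one_sub_one_kronecker (hX : (1 - X).PosSemidef) :
    (1 - (1 : Matrix n n 𝕜) ⊗ₖ X).PosSemidef := by
  have h : (1 : Matrix n n 𝕜) ⊗ₖ (1 - X) = 1 - (1 : Matrix n n 𝕜) ⊗ₖ X := by
    ext ⟨i, j⟩ ⟨k, l⟩
    by_cases i = k <;> simp [one_apply, *]
  exact h ▸ PosSemidef.one.kronecker hX

end Kronecker

section PartialTrace

variable {α β γ : Type*} [Fintype α] [Fintype β] [Fintype γ]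
  (T : Matrix ((α × β) × γ) ((α × β) × γ) ℂ)

theorem trace_ptr3_mul [DecidableEq γ] (N : Matrix (α × β) (α × β) ℂ) :
    (ptr3 T * N).trace = (T * (N ⊗ₖ (1 : Matrix γ γ ℂ))).trace := by
  simp only [trace, diag, mul_apply, ptr3, kroneckerMap_apply, one_apply, Fintype.sum_prod_type,
    Finset.sum_mul, mul_ite, mul_one, mul_zero, Finset.sum_ite_eq', Finset.mem_univ, if_true]
  simp only [Finset.sum_comm (s := (Finset.univ : Finset γ))]

theorem trace_ptr2_mul_kronecker [DecidableEq β] (M : Matrix α α ℂ) (M' : Matrix γ γ ℂ) :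
    (ptr2 T * (M ⊗ₖ M')).trace = (T * ((M ⊗ₖ (1 : Matrix β β ℂ)) ⊗ₖ M')).trace := by
  simp only [trace, diag, mul_apply, ptr2, kroneckerMap_apply, one_apply, Fintype.sum_prod_type,
    Finset.sum_mul, mul_ite, ite_mul, mul_one, mul_zero, zero_mul, Finset.sum_ite_irrel,
    Finset.sum_const_zero, Finset.sum_ite_eq', Finset.mem_univ, if_true]
  simp only [Finset.sum_comm (s := (Finset.univ : Finset β))]

theorem trace_ptr1_mul_kronecker [DecidableEq α] (M : Matrix β β ℂ) (M' : Matrix γ γ ℂ) :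
    (ptr1 T * (M ⊗ₖ M')).trace = (T * (((1 : Matrix α α ℂ) ⊗ₖ M) ⊗ₖ M')).trace := by
  simp only [trace, diag, mul_apply, ptr1, kroneckerMap_apply, one_apply, Fintype.sum_prod_type,
    Finset.sum_mul, mul_ite, ite_mul, one_mul, mul_zero, zero_mul, Finset.sum_ite_irrel,
    Finset.sum_const_zero, Finset.sum_ite_eq', Finset.mem_univ, if_true]
  simp only [Finset.sum_comm (s := (Finset.univ : Finset α))]

end PartialTrace

theorem trace_ptr1_mul_kronecker_eq_mul_trace_ptr2 {α γ : Type*} [Fintype α] [Fintype γ]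
    [DecidableEq α] [DecidableEq γ] {R : Matrix ((α × α) × γ) ((α × α) × γ) ℂ} (hR : R.PosSemidef)
    (htr : R.trace = 1) {W : Matrix α α ℂ} (hW : W.IsHermitian) (hW1 : (1 - W * W).PosSemidef)
    {ε : ℝ} (hε : ε ^ 2 = 1) (hcorr : (ptr3 R * (W ⊗ₖ W)).trace = ε) (W' : Matrix γ γ ℂ) :
    (ptr1 R * (W ⊗ₖ W')).trace = ε * (ptr2 R * (W ⊗ₖ W')).trace := by
  set A := (W ⊗ₖ (1 : Matrix α α ℂ)) ⊗ₖ (1 : Matrix γ γ ℂ)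
  set B := ((1 : Matrix α α ℂ) ⊗ₖ W) ⊗ₖ (1 : Matrix γ γ ℂ)
  have hAB : A * B = (W ⊗ₖ W) ⊗ₖ 1 := by simp [A, B, ← mul_kronecker_mul]
  have hBA : B * A = (W ⊗ₖ W) ⊗ₖ 1 := by simp [A, B, ← mul_kronecker_mul]
  have hRB : R * B = (ε : ℂ) • (R * A) := by
    refine hR.mul_eq_smul_mul_of_trace_mul_eq htr
      ((hW.kronecker isHermitian_one).kronecker isHermitian_one)
      ((isHermitian_one.kronecker hW).kronecker isHermitian_one) ?_ ?_ (hAB.trans hBA.symm) hε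
      (by rw [hAB, ← trace_ptr3_mul]; exact hcorr)
    · simpa [A, ← mul_kronecker_mul] using
        (hW1.one_sub_kronecker_one (n := α)).one_sub_kronecker_one (n := γ)
    · simpa [B, ← mul_kronecker_mul] using
        (hW1.one_sub_one_kronecker (n := α)).one_sub_kronecker_one (n := γ)
  calc (ptr1 R * (W ⊗ₖ W')).trace = (R * B * ((1 ⊗ₖ 1) ⊗ₖ W')).trace := by
        simp [trace_ptr1_mul_kronecker, B, Matrix.mul_assoc, ← mul_kronecker_mul]
    _ = ε * (R * A * ((1 ⊗ₖ 1) ⊗ₖ W')).trace := by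
        rw [hRB, smul_mul_assoc, trace_smul, smul_eq_mul]
    _ = ε * (ptr2 R * (W ⊗ₖ W')).trace := by
        simp [trace_ptr2_mul_kronecker, A, Matrix.mul_assoc, ← mul_kronecker_mul]

theorem bell_restriction_implies_condition_general {d : ℕ}
    (ρ : Matrix (Fin d × Fin d) (Fin d × Fin d) ℂ) (hρ : IsDensityMatrix ρ)
    (R : Matrix ((Fin d × Fin d) × Fin d) ((Fin d × Fin d) × Fin d) ℂ)
    (hRpos : R.PosSemidef) (hRsrc : IsSource122 ρ R)
    (ε : ℝ) (hε : ε = 1 ∨ ε = -1)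
    (W : Matrix (Fin d) (Fin d) ℂ) (hW : W.IsHermitian) (hnW : opNorm W ≤ 1)
    (hBell : (ρ * (W ⊗ₖ W)).trace = (ε : ℂ))
    (W' : Matrix (Fin d) (Fin d) ℂ) :
    (ptr1 R * (W ⊗ₖ W')).trace = (ε : ℂ) * (ρ * (W ⊗ₖ W')).trace := by
  obtain ⟨-, hptr2, hptr3⟩ := hRsrc
  have htr : R.trace = 1 := by simpa [hptr3, hρ.2] using (trace_ptr3_mul R 1).symm
  have hW1 : (1 - W * W).PosSemidef := by
    simpa [hW.eq] using one_sub_conjTranspose_mul_self_posSemidef hnW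
  rw [← hptr2]
  exact trace_ptr1_mul_kronecker_eq_mul_trace_ptr2 hRpos htr hW hW1
    (by rcases hε with rfl | rfl <;> norm_num) (by rw [hptr3, hBell]) W'

/-- Bell's perfect correlation/anticorrelation restriction (44) implies the
sufficient condition (42). -/
theorem bell_restriction_implies_condition {d : ℕ}
    (ρ : Matrix (Fin d × Fin d) (Fin d × Fin d) ℂ) (hρ : IsDensityMatrix ρ)
    (R : Matrix ((Fin d × Fin d) × Fin d) ((Fin d × Fin d) × Fin d) ℂ)
    (hRpos : R.PosSemidef) (hRsrc : IsSource122 ρ R)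
    (ε : ℝ) (hε : ε = 1 ∨ ε = -1)
    (W : Matrix (Fin d) (Fin d) ℂ) (hW : W.IsHermitian) (hnW : opNorm W ≤ 1)
    (hBell : (ρ * (W ⊗ₖ W)).trace = (ε : ℂ))
    (W' : Matrix (Fin d) (Fin d) ℂ) (hW' : W'.IsHermitian) (hnW' : opNorm W' ≤ 1) :
    (ptr1 R * (W ⊗ₖ W')).trace = (ε : ℂ) * (ρ * (W ⊗ₖ W')).trace :=
  bell_restriction_implies_condition_general ρ hρ R hRpos hRsrc ε hε W hW hnW hBell W'

end BellPaper
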